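/- Let (a,b,c,d) ∈ P and z ∈ {z₋, z₊}. Then there exist a constant M > 0 and N ∈ ℕ such that for all k ≥ N: |(1−q)·s^{2k}·zq^{−k}·w(zq^{−k}) − K_z| ≤ M·q^k and |s^{2k−1}·u(zq^{−k})/(zq^{−k}) − (1−q)·K_z| ≤ M·q^k; in other words, zq^{−k}·w(zq^{−k}) = (1−q)⁻¹·K_z·s^{−2k}·(1 + O(q^k)) and u(zq^{−k})/(zq^{−k}) = (1−q)·K_z·s^{1−2k}·(1 + O(q^k)) as k → ∞. -/

import Mathlib

open Complex Filter

noncomputable section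

namespace VVBQJ

/-- The infinite q-shifted factorial `(x;q)_∞`. -/
def poch (q x : ℂ) : ℂ := ∏' j : ℕ, (1 - x * q ^ j)

/-- The q-shifted factorial `(x;q)_n`, `n ∈ ℕ`. -/
def pochN (q x : ℂ) (n : ℕ) : ℂ := ∏ j ∈ Finset.range n, (1 - x * q ^ j)

/-- The normalized Jacobi theta function `θ(x) = (x;q)_∞ (q/x;q)_∞`. -/
def theta (q x : ℂ) : ℂ := poch q x * poch q (q / x)

/-- The condition on the pairs `(a,b)` and `(c,d)` in the parameter set `P`. -/
def pairCond (q zm zp : ℝ) (α β : ℂ) : Prop :=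
  α = (starRingEnd ℂ) β ∨
    (∃ (A B : ℝ) (k₀ : ℤ), α = (A : ℂ) ∧ β = (B : ℂ) ∧
      zp * q ^ k₀ < 1 / B ∧ 1 / B < 1 / A ∧ 1 / A < zp * q ^ (k₀ - 1)) ∨
    (∃ (A B : ℝ) (k₀ : ℤ), α = (A : ℂ) ∧ β = (B : ℂ) ∧
      zm * q ^ (k₀ - 1) < 1 / A ∧ 1 / A < 1 / B ∧ 1 / B < zm * q ^ k₀)

/-- The parameter domain `P`. -/
def memP (q zm zp : ℝ) (a b c d : ℂ) : Prop :=
  a ≠ 0 ∧ b ≠ 0 ∧ c ≠ 0 ∧ d ≠ 0 ∧ a ≠ b ∧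
    (∀ x ∈ ({a, b, c, d} : Set ℂ), ∀ k : ℤ,
      x ≠ ((zp : ℂ))⁻¹ * (q : ℂ) ^ k ∧ x ≠ ((zm : ℂ))⁻¹ * (q : ℂ) ^ k) ∧
    pairCond q zm zp a b ∧ pairCond q zm zp c d

/-- The generic parameter domain `P_gen`. -/
def memPgen (q zm zp : ℝ) (a b c d : ℂ) : Prop :=
  memP q zm zp a b c d ∧ c ≠ d ∧
    ∀ k : ℤ, c / a ≠ (q : ℂ) ^ k ∧ c / b ≠ (q : ℂ) ^ k ∧ d / a ≠ (q : ℂ) ^ k ∧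
      d / b ≠ (q : ℂ) ^ k ∧ c * d / (a * b) ≠ (q : ℂ) ^ k

/-- `s = √(cdq/(ab))`, with the principal branch of the square root. -/
def sP (q : ℝ) (a b c d : ℂ) : ℂ := (c * d * (q : ℂ) / (a * b)) ^ ((1 : ℂ) / 2)

def Acoef (q : ℝ) (a b c d : ℂ) (x : ℝ) : ℂ :=
  (sP q a b c d)⁻¹ * (1 - (q : ℂ) / (a * (x : ℂ))) * (1 - (q : ℂ) / (b * (x : ℂ)))

def Bcoef (q : ℝ) (a b c d : ℂ) (x : ℝ) : ℂ :=
  sP q a b c d * (1 - 1 / (c * (x : ℂ))) * (1 - 1 / (d * (x : ℂ)))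

def Ccoef (q : ℝ) (a b c d : ℂ) (x : ℝ) : ℂ :=
  sP q a b c d + (sP q a b c d)⁻¹ - Acoef q a b c d x - Bcoef q a b c d x

/-- The second order q-difference operator `L`. -/
def Lop (q : ℝ) (a b c d : ℂ) (f : ℝ → ℂ) (x : ℝ) : ℂ :=
  Acoef q a b c d x * f (x / q) + Bcoef q a b c d x * f (q * x) + Ccoef q a b c d x * f x

/-- The weight function `w`. -/
def w (q : ℝ) (a b c d : ℂ) (x : ℝ) : ℂ :=
  poch q (a * (x : ℂ)) * poch q (b * (x : ℂ)) / (poch q (c * (x : ℂ)) * poch q (d * (x : ℂ)))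

/-- The function `u(x) = (1-q)² B(x) x² w(x)`. -/
def u (q : ℝ) (a b c d : ℂ) (x : ℝ) : ℂ :=
  (1 - (q : ℂ)) ^ 2 * Bcoef q a b c d x * (x : ℂ) ^ 2 * w q a b c d x

/-- The Casorati determinant `D(f,g)`. -/
def casD (q : ℝ) (a b c d : ℂ) (f g : ℝ → ℂ) (x : ℝ) : ℂ :=
  (f x * g (q * x) - f (q * x) * g x) * u q a b c d x / ((1 - (q : ℂ)) * (x : ℂ))

/-- The truncated inner product `⟨f,g⟩_{k,l;m,n}`. -/
def trunc (q zm zp : ℝ) (a b c d : ℂ) (f g : ℝ → ℂ) (k l m n : ℤ) : ℂ :=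
  (1 - (q : ℂ)) *
    ((∑ j ∈ Finset.Icc n m, f (zp * q ^ j) * (starRingEnd ℂ) (g (zp * q ^ j)) *
        w q a b c d (zp * q ^ j) * ((zp * q ^ j : ℝ) : ℂ)) -
      ∑ j ∈ Finset.Icc k l, f (zm * q ^ j) * (starRingEnd ℂ) (g (zm * q ^ j)) *
        w q a b c d (zm * q ^ j) * ((zm * q ^ j : ℝ) : ℂ))

/-- The constant `K_z`. -/
def Kz (q : ℝ) (a b c d : ℂ) (z : ℝ) : ℂ :=
  (z : ℂ) * (1 - (q : ℂ)) * (theta q (a * z) * theta q (b * z)) /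
    (theta q (c * z) * theta q (d * z))

/-- Membership in the Hilbert space `ℒ²(ℝ_q, w(x) d_q x)`. -/
def memL2 (q zm zp : ℝ) (a b c d : ℂ) (f : ℝ → ℂ) : Prop :=
  Summable (fun k : ℤ => ‖f (zp * q ^ k)‖ ^ 2 * ‖w q a b c d (zp * q ^ k)‖ * |zp * q ^ k|) ∧
    Summable (fun k : ℤ => ‖f (zm * q ^ k)‖ ^ 2 * ‖w q a b c d (zm * q ^ k)‖ * |zm * q ^ k|)

/-- The inner product on `ℒ²`. -/
def innerL2 (q zm zp : ℝ) (a b c d : ℂ) (f g : ℝ → ℂ) : ℂ :=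
  (1 - (q : ℂ)) *
    ((∑' k : ℤ, f (zp * q ^ k) * (starRingEnd ℂ) (g (zp * q ^ k)) *
        w q a b c d (zp * q ^ k) * ((zp * q ^ k : ℝ) : ℂ)) -
      ∑' k : ℤ, f (zm * q ^ k) * (starRingEnd ℂ) (g (zm * q ^ k)) *
        w q a b c d (zm * q ^ k) * ((zm * q ^ k : ℝ) : ℂ))

/-- The squared `ℒ²`-norm. -/
def normSqL2 (q zm zp : ℝ) (a b c d : ℂ) (f : ℝ → ℂ) : ℝ :=
  (1 - q) *
    ((∑' k : ℤ, ‖f (zp * q ^ k)‖ ^ 2 * ‖w q a b c d (zp * q ^ k)‖ * (zp * q ^ k)) +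
      ∑' k : ℤ, ‖f (zm * q ^ k)‖ ^ 2 * ‖w q a b c d (zm * q ^ k)‖ * (-(zm * q ^ k)))

/-- The q-difference operator `D_q`. -/
def Dq (q : ℝ) (f : ℝ → ℂ) (x : ℝ) : ℂ := (f x - f (q * x)) / ((1 - (q : ℂ)) * (x : ℂ))

/-- The q-line `ℝ_q`. -/
def Rq (q zm zp : ℝ) : Set ℝ := {x | ∃ k : ℤ, x = zm * q ^ k ∨ x = zp * q ^ k}

/-- Membership in the domain `𝒟`. -/
def memD (q zm zp : ℝ) (a b c d : ℂ) (f : ℝ → ℂ) : Prop :=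
  memL2 q zm zp a b c d f ∧ memL2 q zm zp a b c d (Lop q a b c d f) ∧
    (∃ v : ℂ, Tendsto (fun k : ℕ => f (zm * q ^ k)) atTop (nhds v) ∧
        Tendsto (fun k : ℕ => f (zp * q ^ k)) atTop (nhds v)) ∧
    (∃ v : ℂ, Tendsto (fun k : ℕ => Dq q f (zm * q ^ k)) atTop (nhds v) ∧
        Tendsto (fun k : ℕ => Dq q f (zp * q ^ k)) atTop (nhds v))

/-- Membership in the eigenspace `V_μ` (functions on `ℝ_q`). -/
def memV (q zm zp : ℝ) (a b c d : ℂ) (μ : ℂ) (f : ℝ → ℂ) : Prop :=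
  (∀ x ∈ Rq q zm zp, Lop q a b c d f x = μ * f x) ∧
    (∃ v : ℂ, Tendsto (fun k : ℕ => f (zm * q ^ k)) atTop (nhds v) ∧
        Tendsto (fun k : ℕ => f (zp * q ^ k)) atTop (nhds v)) ∧
    (∃ v : ℂ, Tendsto (fun k : ℕ => Dq q f (zm * q ^ k)) atTop (nhds v) ∧
        Tendsto (fun k : ℕ => Dq q f (zp * q ^ k)) atTop (nhds v))

/-- The set of regular spectral values `S_reg = ℂ* \ {± q^{k/2}}`. -/
def Sreg (q : ℝ) (γ : ℂ) : Prop :=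
  γ ≠ 0 ∧ ∀ k : ℤ, γ ≠ ((q ^ ((k : ℝ) / 2) : ℝ) : ℂ) ∧ γ ≠ -((q ^ ((k : ℝ) / 2) : ℝ) : ℂ)

/-- The big q-Jacobi function `φ_γ(x)`. -/
def phi (q : ℝ) (a b c d : ℂ) (γ x : ℂ) : ℂ :=
  ∑' n : ℕ,
    pochN q (q / (a * x)) n * pochN q (sP q a b c d * γ) n * pochN q (sP q a b c d / γ) n /
      (pochN q q n * pochN q (c * q / a) n * pochN q (d * q / a) n) * (b * x) ^ n

/-- The asymptotic solution `Φ_γ(z q^{-k})`, in index form. -/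
def PhiIdx (q : ℝ) (a b c d : ℂ) (γ : ℂ) (z : ℝ) (k : ℤ) : ℂ :=
  let s : ℂ := sP q a b c d
  let x : ℂ := (z : ℂ) * (q : ℂ) ^ (-k)
  (s * γ) ^ k *
    (poch q ((q : ℂ) / (b * x)) * poch q ((q : ℂ) ^ 2 * γ / (a * s * x)) /
      (poch q ((q : ℂ) / (c * x)) * poch q ((q : ℂ) / (d * x)))) *
    ∑' n : ℕ,
      pochN q ((q : ℂ) * γ / s) n * pochN q (c * q * γ / (s * a)) n *
          pochN q (d * q * γ / (s * a)) n /
        (pochN q q n * pochN q ((q : ℂ) ^ 2 * γ / (a * s * x)) n * pochN q ((q : ℂ) * γ ^ 2) n) *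
        ((q : ℂ) / (b * x)) ^ n

/-- Casorati determinant at `x = z q^{-k}` for index-form functions. -/
def casDIdx (q : ℝ) (a b c d : ℂ) (f g : ℤ → ℂ) (z : ℝ) (k : ℤ) : ℂ :=
  (f k * g (k - 1) - f (k - 1) * g k) * u q a b c d (z * q ^ (-k)) /
    ((1 - (q : ℂ)) * ((z * q ^ (-k) : ℝ) : ℂ))

/-- The c-function `c_z(γ)`. -/
def cz (q : ℝ) (a b c d : ℂ) (z : ℝ) (γ : ℂ) : ℂ :=
  let s : ℂ := sP q a b c d
  poch q (s / γ) * poch q (c * q / (a * s * γ)) * poch q (d * q / (a * s * γ)) *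
      theta q (b * s * z * γ) /
    (poch q (c * q / a) * poch q (d * q / a) * poch q (1 / γ ^ 2) * theta q (b * z))

/-- The expansion coefficient `d_z(γ)`. -/
def dz (q : ℝ) (a b c d : ℂ) (z : ℝ) (γ : ℂ) : ℂ :=
  let s : ℂ := sP q a b c d
  (poch q (c * q / a) * poch q (d * q / a) * theta q (b * z) /
      (theta q (a / b) * theta q (c * z) * theta q (d * z))) *
    (poch q (c * q * γ / (s * b)) * poch q (d * q * γ / (s * b)) *
        theta q (a * s * z / (q * γ)) /
      (poch q (q * γ ^ 2) * poch q (s / γ)))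

/-- The Casorati determinant `v(γ) = D(Φ_γ^+, Φ_γ^-)`. -/
def vFun (q zm zp : ℝ) (a b c d : ℂ) (γ : ℂ) : ℂ :=
  let s : ℂ := sP q a b c d;
  -((zp : ℂ) * (1 - (q : ℂ)) * theta q ((zm : ℂ) / zp) /
      (theta q (c * zm) * theta q (d * zm) * theta q (c * zp) * theta q (d * zp))) *
    (poch q (c * q * γ / (a * s)) * poch q (d * q * γ / (a * s)) * poch q (c * q * γ / (b * s)) *
        poch q (d * q * γ / (b * s)) * poch q (s * γ) * poch q (q * γ / s) *
        theta q (a * b * s * zm * zp / (q * γ)) /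
      (γ * (poch q (q * γ ^ 2)) ^ 2))

/-- The function `v₁(γ)` in the continuous part of the spectral measure. -/
def v1Fun (q zm zp : ℝ) (a b c d : ℂ) (γ : ℂ) : ℂ :=
  let s : ℂ := sP q a b c d
  ((poch q (c * q / a)) ^ 2 * (poch q (d * q / a)) ^ 2 * theta q (b * zp) * theta q (b * zm) /
      ((1 - (q : ℂ)) * a * b * (zm : ℂ) ^ 2 * (zp : ℂ) ^ 2 *
        (theta q ((zm : ℂ) / zp) * theta q ((zp : ℂ) / zm) * theta q (a / b) * theta q (b / a)))) *
    (poch q (γ ^ 2) * poch q (γ⁻¹ ^ 2) /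
      (poch q (s * γ) * poch q (s / γ) * poch q (c * q * γ / (a * s)) *
        poch q (c * q / (a * s * γ)) * poch q (d * q * γ / (a * s)) *
        poch q (d * q / (a * s * γ)) *
        (theta q (s * γ) * theta q (s / γ) * theta q (a * b * s * zm * zp * γ) *
          theta q (a * b * s * zm * zp / γ)))) *
    ((zm : ℂ) * (theta q (a * zp) * theta q (c * zp) * theta q (d * zp) * theta q (b * zm) *
          theta q (a * s * zm * γ) * theta q (a * s * zm / γ)) -
      (zp : ℂ) * (theta q (a * zm) * theta q (c * zm) * theta q (d * zm) * theta q (b * zp) *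
          theta q (a * s * zp * γ) * theta q (a * s * zp / γ)))

/-- The function `v₂(γ)` in the continuous part of the spectral measure. -/
def v2Fun (q zm zp : ℝ) (a b c d : ℂ) (γ : ℂ) : ℂ :=
  let s : ℂ := sP q a b c d
  (poch q (c * q / a) * poch q (d * q / a) * poch q (c * q / b) * poch q (d * q / b) *
      (theta q (a * zp) * theta q (a * zm) * theta q (b * zp) * theta q (b * zm) *
        theta q (c * d * zm * zp)) /
      (a * b * (zm : ℂ) ^ 2 * (zp : ℂ) * (1 - (q : ℂ)) *
        (theta q ((zp : ℂ) / zm) * theta q (a / b) * theta q (b / a)))) *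
    (poch q (γ ^ 2) * poch q (γ⁻¹ ^ 2) /
      (poch q (s * γ) * poch q (s / γ) *
        (theta q (s * γ) * theta q (s / γ) * theta q (a * b * s * zm * zp * γ) *
          theta q (a * b * s * zm * zp / γ))))

/-- The function `u₁(γ)`. -/
def u1Fun (q zm zp : ℝ) (a b c d : ℂ) (γ : ℂ) : ℂ :=
  Kz q a b c d zp * cz q a b c d zp γ * cz q a b c d zp γ⁻¹ -
    Kz q a b c d zm * cz q a b c d zm γ * cz q a b c d zm γ⁻¹

/-- The function `u₂(γ)`. -/
def u2Fun (q zm zp : ℝ) (a b c d : ℂ) (γ : ℂ) : ℂ :=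
  Kz q a b c d zp * cz q a b c d zp γ * cz q b a c d zp γ⁻¹ -
    Kz q a b c d zm * cz q a b c d zm γ * cz q b a c d zm γ⁻¹

/-- The big q-Jacobi polynomial `P_k(y; α, β, δ; q)`. -/
def bigqJacobiP (q : ℝ) (α β δ : ℂ) (k : ℕ) (y : ℂ) : ℂ :=
  ∑ j ∈ Finset.range (k + 1),
    pochN q (((q : ℂ) ^ k)⁻¹) j * pochN q (α * β * (q : ℂ) ^ (k + 1)) j * pochN q y j /
      (pochN q q j * pochN q (α * q) j * pochN q (δ * q) j) * (q : ℂ) ^ j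

/-! At `x = z q^{-k}`, `θ(αx) = (αx;q)_∞ (q^{k+1}/(αz);q)_∞`, and `k` applications of the
quasi-periodicity `θ(y/q) = -(y/q) θ(y)` give `q^{k(k+1)/2} θ(αx) = (-αz)^k θ(αz)`. In
`(1-q) s^{2k} x w(x)` the powers of `q` cancel, and the factors `(-αz)^k` cancel against
`s^{2k} = (cdq/ab)^k`, leaving `K_z` times a ratio of the four tails `(q^{k+1}/(αz);q)_∞`, each of
which is `1 + O(q^k)`. The second estimate follows since `s^{2k-1} u(x)/x` is
`(1-q)(1 - q^k/(cz))(1 - q^k/(dz))` times the first quantity. -/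

section Asymptotics

variable {α 𝕜 : Type*} [NormedField 𝕜] {l : Filter α} {r f g : α → 𝕜} {a b : 𝕜}

lemma tendsto_of_isBigO_sub (hf : (fun x => f x - a) =O[l] r) (hr : Tendsto r l (nhds 0)) :
    Tendsto f l (nhds a) := by
  simpa using (hf.trans_tendsto hr).add_const a

lemma isBigO_mul_sub_mul (hf : (fun x => f x - a) =O[l] r) (hg : (fun x => g x - b) =O[l] r)
    (hr : Tendsto r l (nhds 0)) : (fun x => f x * g x - a * b) =O[l] r := by
  have hg_bdd : g =O[l] (fun _ => (1 : 𝕜)) := (tendsto_of_isBigO_sub hg hr).isBigO_one 𝕜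
  have hsplit : (fun x => f x * g x - a * b) = fun x => (f x - a) * g x + a * (g x - b) := by
    funext x; ring
  rw [hsplit]
  exact ((hf.mul hg_bdd).congr_right (by simp)).add (hg.const_mul_left a)

lemma isBigO_inv_sub_inv (hf : (fun x => f x - a) =O[l] r) (ha : a ≠ 0)
    (hr : Tendsto r l (nhds 0)) : (fun x => (f x)⁻¹ - a⁻¹) =O[l] r := by
  have hf_lim : Tendsto f l (nhds a) := tendsto_of_isBigO_sub hf hr
  have hinv_bdd : (fun x => (f x)⁻¹) =O[l] (fun _ => (1 : 𝕜)) :=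
    (hf_lim.inv₀ ha).isBigO_one 𝕜
  have hsplit : (fun x => -a⁻¹ * ((f x - a) * (f x)⁻¹)) =ᶠ[l] fun x => (f x)⁻¹ - a⁻¹ :=
    (hf_lim.eventually_ne ha).mono fun x hx => by field_simp; ring
  exact (((hf.mul hinv_bdd).congr_right (by simp)).const_mul_left _).congr' hsplit
    EventuallyEq.rfl

lemma exists_pos_bound_of_isBigO {E F G : Type*} [SeminormedAddCommGroup E]
    [SeminormedAddCommGroup F] [SeminormedAddCommGroup G] {f : ℕ → E} {g : ℕ → F} {r : ℕ → G}
    (hf : f =O[atTop] r) (hg : g =O[atTop] r) :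
    ∃ M : ℝ, 0 < M ∧ ∃ N : ℕ, ∀ k, N ≤ k → ‖f k‖ ≤ M * ‖r k‖ ∧ ‖g k‖ ≤ M * ‖r k‖ := by
  obtain ⟨M, hM, hMr⟩ := (hf.prod_left hg).exists_pos
  obtain ⟨N, hN⟩ := eventually_atTop.1 hMr.bound
  exact ⟨M, hM, N, fun k hk => ⟨(norm_fst_le _).trans (hN k hk), (norm_snd_le _).trans (hN k hk)⟩⟩

end Asymptotics

section QPochhammer

variable {q : ℂ}

lemma summable_norm_mul_pow (hq : ‖q‖ < 1) (x : ℂ) : Summable fun n : ℕ => ‖x * q ^ n‖ := by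
  simpa [norm_mul, norm_pow] using
    (summable_geometric_of_lt_one (norm_nonneg q) hq).mul_left ‖x‖

lemma multipliable_poch (hq : ‖q‖ < 1) (x : ℂ) : Multipliable fun n : ℕ => 1 - x * q ^ n := by
  simpa [sub_eq_add_neg] using
    multipliable_one_add_of_summable (f := fun n : ℕ => -(x * q ^ n))
      (by simpa using summable_norm_mul_pow hq x)

lemma poch_ne_zero (hq : ‖q‖ < 1) {x : ℂ} (hx : ∀ n : ℕ, x * q ^ n ≠ 1) : poch q x ≠ 0 := by
  simpa [poch, sub_eq_add_neg] using
    tprod_one_add_ne_zero_of_summable (f := fun n : ℕ => -(x * q ^ n))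
      (fun n => by rw [← sub_eq_add_neg, sub_ne_zero]; exact (hx n).symm)
      (by simpa using summable_norm_mul_pow hq x)

lemma poch_eq_one_sub_mul_poch (hq : ‖q‖ < 1) (x : ℂ) : poch q x = (1 - x) * poch q (x * q) := by
  have hshift : (fun n : ℕ => 1 - x * q ^ (n + 1)) = fun n => 1 - x * q * q ^ n := by
    funext n; ring
  rw [poch, tprod_eq_zero_mul' (by rw [hshift]; exact multipliable_poch hq (x * q)), hshift, poch,
    pow_zero, mul_one]

lemma theta_ne_zero (hq : ‖q‖ < 1) {y : ℂ} (hy : ∀ m : ℤ, y ≠ q ^ m) : theta q y ≠ 0 := by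
  refine mul_ne_zero (poch_ne_zero hq fun n h => hy (-n) ?_)
    (poch_ne_zero hq fun n h => hy (n + 1) ?_)
  · rw [zpow_neg, zpow_natCast]
    exact eq_inv_of_mul_eq_one_left h
  · rcases eq_or_ne y 0 with rfl | hy0
    · simp at h
    rw [div_mul_eq_mul_div, div_eq_one_iff_eq hy0] at h
    rw [← h, zpow_add_one₀ (by rintro rfl; simp at h; exact hy0 h.symm), zpow_natCast, mul_comm]

lemma norm_poch_sub_one_le (hq : ‖q‖ < 1) (x : ℂ) :
    ‖poch q x - 1‖ ≤ Real.exp (‖x‖ / (1 - ‖q‖)) - 1 := by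
  have hlim : Tendsto (fun n => ‖∏ i ∈ Finset.range n, (1 + -(x * q ^ i)) - 1‖) atTop
      (nhds ‖poch q x - 1‖) := by
    simpa [poch, ← sub_eq_add_neg] using
      ((multipliable_poch hq x).hasProd.tendsto_prod_nat.sub_const 1).norm
  refine le_of_tendsto' hlim fun n => ((Finset.range n).norm_prod_one_add_sub_one_le _).trans ?_
  gcongr
  calc ∑ i ∈ Finset.range n, ‖-(x * q ^ i)‖ ≤ ∑' i, ‖x * q ^ i‖ := by
        simpa using (summable_norm_mul_pow hq x).sum_le_tsum _ (fun i _ => norm_nonneg _)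
    _ = ‖x‖ / (1 - ‖q‖) := by
        simp_rw [norm_mul, norm_pow]
        rw [tsum_mul_left, tsum_geometric_of_lt_one (norm_nonneg q) hq, div_eq_mul_inv]

lemma isBigO_poch_mul_pow_sub_one (hq : ‖q‖ < 1) (y : ℂ) :
    (fun k : ℕ => poch q (y * q ^ k) - 1) =O[atTop] (fun k => q ^ k) := by
  set S := ‖y‖ / (1 - ‖q‖)
  have hS : 0 ≤ S := div_nonneg (norm_nonneg y) (by linarith)
  have hsmall : ∀ᶠ k : ℕ in atTop, S * ‖q‖ ^ k ≤ 1 := by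
    refine Tendsto.eventually ?_ (ge_mem_nhds one_pos)
    simpa using (tendsto_pow_atTop_nhds_zero_of_lt_one (norm_nonneg q) hq).const_mul S
  refine Asymptotics.IsBigO.of_bound (2 * S) (hsmall.mono fun k hk => ?_)
  calc ‖poch q (y * q ^ k) - 1‖ ≤ Real.exp (S * ‖q‖ ^ k) - 1 := by
        convert norm_poch_sub_one_le hq (y * q ^ k) using 3
        rw [norm_mul, norm_pow]; ring
    _ ≤ |Real.exp (S * ‖q‖ ^ k) - 1| := le_abs_self _
    _ ≤ 2 * |S * ‖q‖ ^ k| := Real.abs_exp_sub_one_le (by rwa [abs_of_nonneg (by positivity)])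
    _ = 2 * S * ‖q ^ k‖ := by rw [abs_of_nonneg (by positivity), norm_pow]; ring

lemma theta_mul_inv (hq : ‖q‖ < 1) (hq0 : q ≠ 0) {x : ℂ} (hx : x ≠ 0) :
    theta q (x * q⁻¹) = -(x * q⁻¹) * theta q x := by
  have h := poch_eq_one_sub_mul_poch hq (q / x)
  rw [theta, theta, poch_eq_one_sub_mul_poch hq (x * q⁻¹), h, inv_mul_cancel_right₀ hq0,
    show q / (x * q⁻¹) = q / x * q by field_simp]
  field_simp
  ring

lemma pow_choose_two_mul_theta_mul_zpow_neg (hq : ‖q‖ < 1) (hq0 : q ≠ 0) {x : ℂ} (hx : x ≠ 0)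
    (k : ℕ) : q ^ (k + 1).choose 2 * theta q (x * q ^ (-(k : ℤ))) = (-x) ^ k * theta q x := by
  induction k with
  | zero => simp
  | succ k ih =>
    have hxk : x * q ^ (-(k : ℤ)) ≠ 0 := mul_ne_zero hx (zpow_ne_zero _ hq0)
    rw [show x * q ^ (-((k + 1 : ℕ) : ℤ)) = x * q ^ (-(k : ℤ)) * q⁻¹ by
        rw [mul_assoc, ← zpow_neg_one, ← zpow_add₀ hq0]; push_cast; ring_nf,
      theta_mul_inv hq hq0 hxk, Nat.choose_succ_succ' (k + 1) 1, Nat.choose_one_right, pow_add,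
      pow_succ (-x), mul_right_comm _ (-x), ← ih, zpow_neg, zpow_natCast]
    field_simp
    ring

end QPochhammer

section Weight

variable {q : ℝ} {a b c d : ℂ} {z : ℝ}

lemma sP_sq (a b c d : ℂ) : sP q a b c d ^ 2 = c * d * q / (a * b) := by
  rw [sP, one_div]
  exact Complex.cpow_ofNat_inv_pow _ 2

lemma sP_ne_zero (hq0 : 0 < q) (ha : a ≠ 0) (hb : b ≠ 0) (hc : c ≠ 0) (hd : d ≠ 0) :
    sP q a b c d ≠ 0 := by
  have hsq : sP q a b c d ^ 2 ≠ 0 := by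
    rw [sP_sq]
    exact div_ne_zero (mul_ne_zero (mul_ne_zero hc hd) (by exact_mod_cast hq0.ne'))
      (mul_ne_zero ha hb)
  exact pow_ne_zero_iff two_ne_zero |>.1 hsq

lemma theta_mul_ne_zero_of_memP {zm zp : ℝ} (hq0 : 0 < q) (hq1 : q < 1)
    (hP : memP q zm zp a b c d) (hz : z = zm ∨ z = zp) {α : ℂ} (hα : α ∈ ({a, b, c, d} : Set ℂ)) :
    theta q (α * z) ≠ 0 := by
  obtain ⟨-, -, -, -, -, hlattice, -⟩ := hP
  have hqn : ‖(q : ℂ)‖ < 1 := by rwa [Complex.norm_real, Real.norm_of_nonneg hq0.le]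
  refine theta_ne_zero hqn fun m h => ?_
  have hz0 : (z : ℂ) ≠ 0 := by
    rintro hz0
    rw [hz0, mul_zero] at h
    exact zpow_ne_zero m (by exact_mod_cast hq0.ne') h.symm
  have hαz : α = (z : ℂ)⁻¹ * (q : ℂ) ^ m :=
    (eq_inv_mul_iff_mul_eq₀ hz0).2 (by rw [mul_comm, h])
  rcases hz with rfl | rfl
  exacts [(hlattice α hα m).2 hαz, (hlattice α hα m).1 hαz]

lemma xw_mul_poch_tails_eq (hq0 : 0 < q) (hq1 : q < 1) (ha : a ≠ 0) (hb : b ≠ 0) (hc : c ≠ 0)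
    (hd : d ≠ 0) (hz : z ≠ 0) (hθc : theta q (c * z) ≠ 0) (hθd : theta q (d * z) ≠ 0) (k : ℕ) :
    (1 - (q : ℂ)) * sP q a b c d ^ (2 * k) * ((z * q ^ (-(k : ℤ)) : ℝ) : ℂ) *
        w q a b c d (z * q ^ (-(k : ℤ))) *
        (poch q (q / (a * z) * (q : ℂ) ^ k) * poch q (q / (b * z) * (q : ℂ) ^ k)) =
      Kz q a b c d z *
        (poch q (q / (c * z) * (q : ℂ) ^ k) * poch q (q / (d * z) * (q : ℂ) ^ k)) := by
  have hqc : (q : ℂ) ≠ 0 := by exact_mod_cast hq0.ne'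
  have hqn : ‖(q : ℂ)‖ < 1 := by rwa [Complex.norm_real, Real.norm_of_nonneg hq0.le]
  have hzc : (z : ℂ) ≠ 0 := by exact_mod_cast hz
  set x : ℂ := ((z * q ^ (-(k : ℤ)) : ℝ) : ℂ) with hx
  have hxq : x * (q : ℂ) ^ k = z := by
    rw [hx]; push_cast
    rw [mul_assoc, zpow_neg, zpow_natCast, inv_mul_cancel₀ (pow_ne_zero _ hqc), mul_one]
  set Q := (q : ℂ) ^ (k + 1).choose 2
  have hQ : Q ≠ 0 := pow_ne_zero _ hqc
  have key : ∀ α : ℂ, α ≠ 0 →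
      poch q (α * x) * poch q (q / (α * z) * (q : ℂ) ^ k) * Q =
        (-(α * z)) ^ k * theta q (α * z) := by
    intro α hα
    have hαz : α * (z : ℂ) ≠ 0 := mul_ne_zero hα hzc
    have hαx : α * x = α * z * (q : ℂ) ^ (-(k : ℤ)) := by rw [hx]; push_cast; ring
    have hqαx : (q : ℂ) / (α * z * (q : ℂ) ^ (-(k : ℤ))) = q / (α * z) * (q : ℂ) ^ k := by
      rw [zpow_neg, zpow_natCast]; field_simp
    rw [← pow_choose_two_mul_theta_mul_zpow_neg hqn hqc hαz k, theta, hqαx, hαx]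
    ring
  have hS : sP q a b c d ^ (2 * k) * x * (-(a * z)) ^ k * (-(b * z)) ^ k =
      z * (-(c * z)) ^ k * (-(d * z)) ^ k := by
    rw [pow_mul, sP_sq, div_pow, ← hxq]
    field_simp
    ring
  have hPc : poch q (c * x) ≠ 0 := fun h => mul_ne_zero (pow_ne_zero k (neg_ne_zero.2
    (mul_ne_zero hc hzc))) hθc (by rw [← key c hc, h]; ring)
  have hPd : poch q (d * x) ≠ 0 := fun h => mul_ne_zero (pow_ne_zero k (neg_ne_zero.2
    (mul_ne_zero hd hzc))) hθd (by rw [← key d hd, h]; ring)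
  set E : ℂ → ℂ := fun α => poch q (q / (α * z) * (q : ℂ) ^ k)
  set Y : ℂ → ℂ := fun α => (-(α * z)) ^ k
  set θ : ℂ → ℂ := fun α => theta q (α * z)
  set P : ℂ → ℂ := fun α => poch q (α * x)
  have hcross : (1 - (q : ℂ)) * sP q a b c d ^ (2 * k) * x * (P a * P b) * (E a * E b) *
      (θ c * θ d) = z * (1 - (q : ℂ)) * (θ a * θ b) * (E c * E d) * (P c * P d) := by
    -- multiply by `Q²` so that `key` turns each `P α * E α * Q` into `(-αz)^k θ(αz)`
    refine mul_right_cancel₀ (pow_ne_zero 2 hQ) ?_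
    linear_combination (1 - (q : ℂ)) * sP q a b c d ^ (2 * k) * x * θ c * θ d *
        (P a * E a * Q * key b hb + Y b * θ b * key a ha) +
      (1 - (q : ℂ)) * θ a * θ b * θ c * θ d * hS -
      z * (1 - (q : ℂ)) * θ a * θ b * (P c * E c * Q * key d hd + Y d * θ d * key c hc)
  rw [w, Kz, ← hx, mul_div_assoc', div_mul_eq_mul_div _ (P c * P d),
    div_mul_eq_mul_div _ (θ c * θ d), div_eq_div_iff (mul_ne_zero hPc hPd) (mul_ne_zero hθc hθd)]
  linear_combination hcross

lemma sP_zpow_mul_u_div_eq (hs : sP q a b c d ≠ 0) (hq0 : 0 < q) (hc : c ≠ 0) (hd : d ≠ 0)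
    (hz : z ≠ 0) (k : ℕ) :
    sP q a b c d ^ (2 * (k : ℤ) - 1) * u q a b c d (z * q ^ (-(k : ℤ))) /
        ((z * q ^ (-(k : ℤ)) : ℝ) : ℂ) =
      (1 - (q : ℂ)) * ((1 - (q : ℂ) ^ k / (c * z)) * (1 - (q : ℂ) ^ k / (d * z))) *
        ((1 - (q : ℂ)) * sP q a b c d ^ (2 * k) * ((z * q ^ (-(k : ℤ)) : ℝ) : ℂ) *
          w q a b c d (z * q ^ (-(k : ℤ)))) := by
  have hqk : (q : ℂ) ^ k ≠ 0 := pow_ne_zero _ (by exact_mod_cast hq0.ne')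
  have hx : ((z * q ^ (-(k : ℤ)) : ℝ) : ℂ) = z / (q : ℂ) ^ k := by
    push_cast; rw [zpow_neg, zpow_natCast, div_eq_mul_inv]
  have hzc : (z : ℂ) ≠ 0 := by exact_mod_cast hz
  rw [u, Bcoef, zpow_sub₀ hs, zpow_one, show 2 * (k : ℤ) = ((2 * k : ℕ) : ℤ) by push_cast; ring,
    zpow_natCast, hx]
  field_simp

lemma isBigO_xw_sub_Kz (hq0 : 0 < q) (hq1 : q < 1) (ha : a ≠ 0) (hb : b ≠ 0) (hc : c ≠ 0)
    (hd : d ≠ 0) (hz : z ≠ 0) (hθc : theta q (c * z) ≠ 0) (hθd : theta q (d * z) ≠ 0) :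
    (fun k : ℕ => (1 - (q : ℂ)) * sP q a b c d ^ (2 * k) * ((z * q ^ (-(k : ℤ)) : ℝ) : ℂ) *
        w q a b c d (z * q ^ (-(k : ℤ))) - Kz q a b c d z) =O[atTop] (fun k => (q : ℂ) ^ k) := by
  have hqn : ‖(q : ℂ)‖ < 1 := by rwa [Complex.norm_real, Real.norm_of_nonneg hq0.le]
  have hr : Tendsto (fun k : ℕ => (q : ℂ) ^ k) atTop (nhds 0) :=
    tendsto_pow_atTop_nhds_zero_of_norm_lt_one hqn
  set E : ℂ → ℕ → ℂ := fun α k => poch q (q / (α * z) * (q : ℂ) ^ k)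
  have hE : ∀ α, (fun k => E α k - 1) =O[atTop] (fun k => (q : ℂ) ^ k) :=
    fun α => isBigO_poch_mul_pow_sub_one hqn _
  have hEab := isBigO_mul_sub_mul (hE a) (hE b) hr
  have hratio := isBigO_mul_sub_mul (isBigO_mul_sub_mul (hE c) (hE d) hr)
    (isBigO_inv_sub_inv hEab (by norm_num) hr) hr
  have hEab_ne : ∀ᶠ k in atTop, E a k * E b k ≠ 0 :=
    (tendsto_of_isBigO_sub hEab hr).eventually_ne (by norm_num)
  refine (hratio.const_mul_left (Kz q a b c d z)).congr' (hEab_ne.mono fun k hk => ?_)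
    EventuallyEq.rfl
  linear_combination (-(E a k * E b k)⁻¹) * xw_mul_poch_tails_eq hq0 hq1 ha hb hc hd hz hθc hθd k +
    (1 - (q : ℂ)) * sP q a b c d ^ (2 * k) * ((z * q ^ (-(k : ℤ)) : ℝ) : ℂ) *
      w q a b c d (z * q ^ (-(k : ℤ))) * mul_inv_cancel₀ hk

lemma isBigO_u_div_sub_Kz (hq0 : 0 < q) (hq1 : q < 1) (ha : a ≠ 0) (hb : b ≠ 0) (hc : c ≠ 0)
    (hd : d ≠ 0) (hz : z ≠ 0) (hθc : theta q (c * z) ≠ 0) (hθd : theta q (d * z) ≠ 0) :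
    (fun k : ℕ => sP q a b c d ^ (2 * (k : ℤ) - 1) * u q a b c d (z * q ^ (-(k : ℤ))) /
        ((z * q ^ (-(k : ℤ)) : ℝ) : ℂ) - (1 - (q : ℂ)) * Kz q a b c d z) =O[atTop]
      (fun k => (q : ℂ) ^ k) := by
  have hr : Tendsto (fun k : ℕ => (q : ℂ) ^ k) atTop (nhds 0) :=
    tendsto_pow_atTop_nhds_zero_of_norm_lt_one (by
      rwa [Complex.norm_real, Real.norm_of_nonneg hq0.le])
  have hB : ∀ α, (fun k : ℕ => (1 - (q : ℂ) ^ k / (α * z)) - 1) =O[atTop] (fun k => (q : ℂ) ^ k) :=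
    fun α => (Asymptotics.isBigO_const_mul_self (-(α * z)⁻¹) _ atTop).congr_left fun k => by ring
  refine ((isBigO_mul_sub_mul (isBigO_mul_sub_mul (hB c) (hB d) hr)
    (isBigO_xw_sub_Kz hq0 hq1 ha hb hc hd hz hθc hθd) hr).const_mul_left
      (1 - (q : ℂ))).congr_left fun k => ?_
  rw [sP_zpow_mul_u_div_eq (sP_ne_zero hq0 ha hb hc hd) hq0 hc hd hz k]
  ring

end Weight

/-- asymptotic behavior of `x w(x)` and `u(x)/x` for large `|x|`. -/
theorem statement1 (q zm zp : ℝ) (a b c d : ℂ)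
    (hq0 : 0 < q) (hq1 : q < 1) (hzm : zm < 0) (hzp : 0 < zp)
    (hP : memP q zm zp a b c d) (z : ℝ) (hz : z = zm ∨ z = zp) :
    ∃ M : ℝ, 0 < M ∧ ∃ N : ℕ, ∀ k : ℕ, N ≤ k →
      ‖(1 - (q : ℂ)) * sP q a b c d ^ (2 * k) * ((z * q ^ (-(k : ℤ)) : ℝ) : ℂ) *
            w q a b c d (z * q ^ (-(k : ℤ))) - Kz q a b c d z‖ ≤ M * q ^ k ∧
      ‖sP q a b c d ^ (2 * (k : ℤ) - 1) * u q a b c d (z * q ^ (-(k : ℤ))) /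
            ((z * q ^ (-(k : ℤ)) : ℝ) : ℂ) - (1 - (q : ℂ)) * Kz q a b c d z‖ ≤ M * q ^ k := by
  have hθc := theta_mul_ne_zero_of_memP hq0 hq1 hP hz (α := c) (by simp)
  have hθd := theta_mul_ne_zero_of_memP hq0 hq1 hP hz (α := d) (by simp)
  obtain ⟨ha, hb, hc, hd, -⟩ := hP
  have hz0 : z ≠ 0 := by rcases hz with rfl | rfl <;> [exact hzm.ne; exact hzp.ne']
  have hreal : (fun k : ℕ => (q : ℂ) ^ k) =O[atTop] (fun k => q ^ k) :=
    Asymptotics.isBigO_of_le _ fun k => by simp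
  obtain ⟨M, hM, N, hN⟩ := exists_pos_bound_of_isBigO
    ((isBigO_xw_sub_Kz hq0 hq1 ha hb hc hd hz0 hθc hθd).trans hreal)
    ((isBigO_u_div_sub_Kz hq0 hq1 ha hb hc hd hz0 hθc hθd).trans hreal)
  refine ⟨M, hM, N, fun k hk => ?_⟩
  simpa only [Real.norm_of_nonneg (pow_nonneg hq0.le k)] using hN k hk
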